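/- arXiv:2301.02223 — 2 statements merged into one kernel-verified Lean document; each statement's English description precedes it below -/
import Mathlib

section
/- Let n, r be positive integers and c, d integers. Set 𝒹₁ = gcd(c−d, n) and 𝒹₂ = gcd(c+(r−1)d, n). The smallest positive integer A such that the system B·x ≡ A·(1,...,1)^T (mod n) has a solution x ∈ ℤ^r equals gcd(𝒹₂, d·n/𝒹₁), where B is the r×r matrix with diagonal entries c and off-diagonal entries d. -/
/-!
Writing `S = ∑ⱼ xⱼ`, the `i`-th entry of `B x` is `(c - d) xᵢ + d S`. If `B x ≡ a (1, …, 1)`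
modulo `n`, then `(c - d)(xᵢ - xⱼ) ≡ 0`, so all `xᵢ` agree modulo `M = n / 𝒹₁`; hence
`S ≡ r xᵢ (mod M)`, `d S ≡ r d xᵢ (mod d M)`, and `a ≡ (c + (r - 1) d) xᵢ` modulo
`gcd(𝒹₂, d n / 𝒹₁)`. Conversely, for a constant vector `X` perturbed by `M v` in one coordinate,
every entry of `B x` is `(c + (r - 1) d) X + (d n / 𝒹₁) v` modulo `n`, and by Bézout these values
reach `gcd(𝒹₂, d n / 𝒹₁)`.
-/

open Finset Matrix

theorem Matrix.mulVec_apply_of_eq_ite {ι R : Type*} [Fintype ι] [DecidableEq ι] [CommRing R]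
    {B : Matrix ι ι R} {c d : R} (hB : ∀ i j, B i j = if i = j then c else d)
    (x : ι → R) (i : ι) :
    (B *ᵥ x) i = (c - d) * x i + d * ∑ j, x j := by
  have hsplit : ∀ j, B i j * x j = (if i = j then (c - d) * x j else 0) + d * x j := by
    intro j
    rw [hB]
    split_ifs <;> ring
  simp only [mulVec, dotProduct, hsplit, sum_add_distrib, sum_ite_eq, mem_univ, if_true, mul_sum]

theorem Int.exists_modEq_gcd_gcd (a b n : ℤ) :
    ∃ x y, (Int.gcd (Int.gcd a n : ℤ) b : ℤ) ≡ a * x + b * y [ZMOD n] := by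
  set g : ℤ := (Int.gcd a n : ℤ)
  refine ⟨Int.gcdA a n * Int.gcdA g b, Int.gcdB g b,
    Int.modEq_iff_dvd.2 ⟨-(Int.gcdB a n * Int.gcdA g b), ?_⟩⟩
  rw [Int.gcd_eq_gcd_ab g b]
  linear_combination (-Int.gcdA g b) * Int.gcd_eq_gcd_ab a n

variable {ι : Type*} [Fintype ι] [DecidableEq ι] [Nonempty ι] {B : Matrix ι ι ℤ} {c d n : ℤ}

theorem exists_mulVec_modEq_gcd (hB : ∀ i j, B i j = if i = j then c else d) :
    ∃ x : ι → ℤ, ∀ i, (B *ᵥ x) i ≡ Int.gcd (Int.gcd (c + (Fintype.card ι - 1) * d) n : ℤ)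
      (d * n / (Int.gcd (c - d) n : ℤ)) [ZMOD n] := by
  set M := n / (Int.gcd (c - d) n : ℤ)
  have hM : d * n / (Int.gcd (c - d) n : ℤ) = d * M :=
    Int.mul_ediv_assoc d (Int.gcd_dvd_right _ _)
  obtain ⟨e, he⟩ := Int.gcd_dvd_left (c - d) n
  have hcM : (c - d) * M = n * e := by
    rw [he, mul_right_comm, Int.mul_ediv_cancel' (Int.gcd_dvd_right _ _)]
  obtain ⟨X, v, hXv⟩ :=
    Int.exists_modEq_gcd_gcd (c + (Fintype.card ι - 1) * d) (d * n / (Int.gcd (c - d) n : ℤ)) n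
  obtain ⟨i₀⟩ := ‹Nonempty ι›
  refine ⟨fun i => X + if i = i₀ then M * v else 0, fun i => Int.ModEq.trans ?_ hXv.symm⟩
  rw [mulVec_apply_of_eq_ite hB, hM, Int.modEq_iff_dvd]
  simp only [sum_add_distrib, sum_const, card_univ, sum_ite_eq', mem_univ, if_true, nsmul_eq_mul]
  split_ifs
  · exact ⟨-(e * v), by linear_combination (-v) * hcM⟩
  · exact ⟨0, by ring⟩

theorem gcd_dvd_of_forall_mulVec_modEq (hn : 0 < n)
    (hB : ∀ i j, B i j = if i = j then c else d) {x : ι → ℤ} {a : ℤ}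
    (hx : ∀ i, (B *ᵥ x) i ≡ a [ZMOD n]) :
    (Int.gcd (Int.gcd (c + (Fintype.card ι - 1) * d) n : ℤ)
      (d * n / (Int.gcd (c - d) n : ℤ)) : ℤ) ∣ a := by
  set A := c + (Fintype.card ι - 1) * d
  set M := n / (Int.gcd (c - d) n : ℤ)
  set g : ℤ := (Int.gcd (Int.gcd A n : ℤ) (d * n / (Int.gcd (c - d) n : ℤ)) : ℤ)
  have hM : d * n / (Int.gcd (c - d) n : ℤ) = d * M :=
    Int.mul_ediv_assoc d (Int.gcd_dvd_right _ _)
  have hgA : g ∣ A := (Int.gcd_dvd_left _ _).trans (Int.gcd_dvd_left _ _)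
  have hgn : g ∣ n := (Int.gcd_dvd_left _ _).trans (Int.gcd_dvd_right _ _)
  have hgdM : g ∣ d * M := hM ▸ Int.gcd_dvd_right _ _
  obtain ⟨i₀⟩ := ‹Nonempty ι›
  have hxM : ∀ i, x i ≡ x i₀ [ZMOD M] := by
    intro i
    have h := (hx i).trans (hx i₀).symm
    rw [mulVec_apply_of_eq_ite hB, mulVec_apply_of_eq_ite hB] at h
    have := Int.ModEq.cancel_left_div_gcd hn (Int.ModEq.add_right_cancel' _ h)
    rwa [Int.gcd_comm] at this
  have hsum : ∑ j, x j ≡ Fintype.card ι * x i₀ [ZMOD M] := by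
    simpa using Int.ModEq.sum fun j (_ : j ∈ univ) => hxM j
  refine Int.modEq_zero_iff_dvd.1 ?_
  calc a ≡ (B *ᵥ x) i₀ [ZMOD g] := (hx i₀).symm.of_dvd hgn
    _ = (c - d) * x i₀ + d * ∑ j, x j := mulVec_apply_of_eq_ite hB x i₀
    _ ≡ (c - d) * x i₀ + d * (Fintype.card ι * x i₀) [ZMOD g] :=
        ((hsum.mul_left' (c := d)).of_dvd hgdM).add_left _
    _ = A * x i₀ := by ring
    _ ≡ 0 [ZMOD g] := Int.modEq_zero_iff_dvd.2 (hgA.mul_right _)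

theorem stmt_5 (n r : ℕ) (hn : 0 < n) (hr : 0 < r) (c d : ℤ)
    (B : Matrix (Fin r) (Fin r) ℤ)
    (hB : ∀ i j, B i j = if i = j then c else d) :
    IsLeast {a : ℤ | 0 < a ∧ ∃ x : Fin r → ℤ, ∀ i, B.mulVec x i ≡ a [ZMOD (n : ℤ)]}
      ((Int.gcd ((Int.gcd (c + (r - 1) * d) n : ℤ))
        (d * n / (Int.gcd (c - d) n : ℤ)) : ℤ)) := by
  have : Nonempty (Fin r) := ⟨⟨0, hr⟩⟩
  have hg : (0 : ℤ) < Int.gcd ((Int.gcd (c + (r - 1) * d) n : ℤ))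
      (d * n / (Int.gcd (c - d) n : ℤ)) := by
    simp [Int.gcd_pos_iff, hn.ne']
  rw [show (r : ℤ) = Fintype.card (Fin r) by simp] at hg ⊢
  exact ⟨⟨hg, exists_mulVec_modEq_gcd hB⟩, fun a ⟨ha, _, hx⟩ =>
    Int.le_of_dvd ha (gcd_dvd_of_forall_mulVec_modEq (by exact_mod_cast hn) hB hx)⟩
end

section
/- Let n, r be positive integers and c, d integers, with 𝒹₁ = gcd(c−d, n), 𝒹₂ = gcd(c+(r−1)d, n), and b = gcd(r, n). Define on the set of pairs (y, z) with y ∈ (n/𝒹₁)·ℤ/nℤ summed over r−1 coordinates and z ∈ (n/𝒹₂)·ℤ/nℤ the condition that z − y ≡ 0 (mod b). Then the proportion of tuples (y₁,...,y_{r−1}, z), with each y_i a multiple of n/𝒹₁ in ℤ/nℤ and z a multiple of n/𝒹₂ in ℤ/nℤ (assuming r ≥ 2), satisfying z − (y₁ + ⋯ + y_{r−1}) ≡ 0 (mod b), equals gcd(n/𝒹₁, n/𝒹₂, b)/b. -/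
/-! With H₁ = ⟨n/𝒹₁⟩ and H₂ = ⟨n/𝒹₂⟩ in ℤ/nℤ, the tuples counted are the preimage of ⟨b⟩ under
the homomorphism (y, z) ↦ z − ∑ yᵢ on H₁^{r−1} × H₂. Its image is H₁ + H₂, so modulo ⟨b⟩ the image is
(H₁ + H₂ + ⟨b⟩)/⟨b⟩ = ⟨g⟩/⟨b⟩ with g = gcd(n/𝒹₁, n/𝒹₂, b), a group of order b/g; hence the
preimage has 𝒹₁^{r−1}𝒹₂ · g/b elements. -/

open AddSubgroup

section SubSum

variable {G : Type*} [AddCommGroup G] (H₁ H₂ : AddSubgroup G) (k : ℕ)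

def subSumHom : (Fin k → H₁) × H₂ →+ G :=
  AddMonoidHom.mk' (fun p => (p.2 : G) - ∑ i, (p.1 i : G)) fun p q => by
    simp only [Prod.snd_add, Prod.fst_add, Pi.add_apply, coe_add, Finset.sum_add_distrib]
    abel

@[simp]
lemma subSumHom_apply (p : (Fin k → H₁) × H₂) :
    subSumHom H₁ H₂ k p = (p.2 : G) - ∑ i, (p.1 i : G) := rfl

lemma range_subSumHom (hk : k ≠ 0) : (subSumHom H₁ H₂ k).range = H₁ ⊔ H₂ := by
  apply le_antisymm
  · rintro _ ⟨p, rfl⟩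
    exact sub_mem (mem_sup_right p.2.2) (sum_mem fun i _ => mem_sup_left (p.1 i).2)
  · refine sup_le (fun x hx => ⟨(Pi.single ⟨0, Nat.pos_of_ne_zero hk⟩ (-⟨x, hx⟩), 0), ?_⟩)
      fun x hx => ⟨(0, ⟨x, hx⟩), by simp⟩
    simp [Pi.single_apply, apply_ite (fun y : H₁ => (y : G))]

/-- The composite of `subSumHom` with `G → G ⧸ B` has image `(H₁ ⊔ H₂ ⊔ B) ⧸ B`. -/
lemma card_comap_subSumHom_mul_relIndex (B : AddSubgroup G) (hk : k ≠ 0) :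
    Nat.card (B.comap (subSumHom H₁ H₂ k)) * B.relIndex (H₁ ⊔ H₂ ⊔ B) =
      Nat.card H₁ ^ k * Nat.card H₂ := by
  rw [relIndex_sup_right, ← range_subSumHom H₁ H₂ k hk, ← index_comap, card_mul_index,
    Nat.card_prod, Nat.card_fun, Nat.card_fin]

end SubSum

lemma AddSubgroup.zmultiples_natCast_sup {R : Type*} [AddGroupWithOne R] (a b : ℕ) :
    zmultiples (a : R) ⊔ zmultiples (b : R) = zmultiples ((a.gcd b : ℕ) : R) := by
  have h := congrArg (map (Int.castAddHom R)) (Int.zmultiples_sup a b)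
  simpa only [map_sup, AddMonoidHom.map_zmultiples, Int.gcd_natCast_natCast, Int.coe_castAddHom,
    Int.cast_natCast] using h

namespace ZMod

variable {n : ℕ}

lemma mem_zmultiples_iff_exists_eq_mul (a x : ZMod n) :
    x ∈ zmultiples a ↔ ∃ t : ZMod n, x = t * a := by
  simp only [mem_zmultiples_iff, zsmul_eq_mul]
  constructor
  · rintro ⟨t, rfl⟩
    exact ⟨t, rfl⟩
  · rintro ⟨t, rfl⟩
    obtain ⟨t, rfl⟩ := intCast_surjective t
    exact ⟨t, rfl⟩

lemma index_zmultiples_natCast {a : ℕ} (ha : a ∣ n) : (zmultiples (a : ZMod n)).index = a := by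
  have hker : (Int.castAddHom (ZMod n)).ker ≤ zmultiples (a : ℤ) := by
    rw [ker_intCastAddHom, zmultiples_le]
    exact Int.mem_zmultiples_iff.mpr (Int.natCast_dvd_natCast.mpr ha)
  have hmap : zmultiples (a : ZMod n) = (zmultiples (a : ℤ)).map (Int.castAddHom (ZMod n)) := by
    simp [AddMonoidHom.map_zmultiples]
  rw [hmap, index_map_eq _ intCast_surjective hker, Int.index_zmultiples, Int.natAbs_natCast]

lemma card_zmultiples_natCast_div [NeZero n] {d : ℕ} (hd : d ∣ n) :
    Nat.card (zmultiples ((n / d : ℕ) : ZMod n)) = d := by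
  have h := card_mul_index (zmultiples ((n / d : ℕ) : ZMod n))
  rw [index_zmultiples_natCast (Nat.div_dvd_of_dvd hd), Nat.card_zmod] at h
  have hpos : 0 < n / d :=
    Nat.div_pos (Nat.le_of_dvd (NeZero.pos n) hd) (Nat.pos_of_dvd_of_pos hd (NeZero.pos n))
  exact Nat.eq_of_mul_eq_mul_right hpos (h.trans (Nat.mul_div_cancel' hd).symm)

lemma card_subtype_eq_card_comap_subSumHom (k : ℕ) (a₁ a₂ b : ZMod n) :
    Nat.card {p : (Fin k → ZMod n) × ZMod n //
        (∀ i, ∃ t : ZMod n, p.1 i = t * a₁) ∧ (∃ t : ZMod n, p.2 = t * a₂) ∧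
        (∃ t : ZMod n, p.2 - ∑ i, p.1 i = t * b)} =
      Nat.card ((zmultiples b).comap (subSumHom (zmultiples a₁) (zmultiples a₂) k)) := by
  simp only [← mem_zmultiples_iff_exists_eq_mul]
  exact Nat.card_congr
    { toFun := fun p => ⟨(fun i => ⟨p.1.1 i, p.2.1 i⟩, ⟨p.1.2, p.2.2.1⟩), p.2.2.2⟩
      invFun := fun q => ⟨(fun i => q.1.1 i, q.1.2), fun i => (q.1.1 i).2, q.1.2.2, q.2⟩
      left_inv := fun _ => rfl
      right_inv := fun _ => rfl }

theorem card_comap_subSumHom [NeZero n] {k d₁ d₂ b : ℕ} (hk : k ≠ 0) (hd₁ : d₁ ∣ n)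
    (hd₂ : d₂ ∣ n) (hb : b ∣ n) :
    b * Nat.card ((zmultiples (b : ZMod n)).comap
        (subSumHom (zmultiples ((n / d₁ : ℕ) : ZMod n)) (zmultiples ((n / d₂ : ℕ) : ZMod n)) k)) =
      ((n / d₁).gcd (n / d₂)).gcd b * (d₁ ^ k * d₂) := by
  have key := card_comap_subSumHom_mul_relIndex (zmultiples ((n / d₁ : ℕ) : ZMod n))
    (zmultiples ((n / d₂ : ℕ) : ZMod n)) k (zmultiples (b : ZMod n)) hk
  rw [zmultiples_natCast_sup, zmultiples_natCast_sup, card_zmultiples_natCast_div hd₁,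
    card_zmultiples_natCast_div hd₂] at key
  set g := ((n / d₁).gcd (n / d₂)).gcd b
  have hgb : g ∣ b := Nat.gcd_dvd_right _ _
  have hle : zmultiples (b : ZMod n) ≤ zmultiples (g : ZMod n) :=
    zmultiples_le.mpr ((mem_zmultiples_iff_exists_eq_mul _ _).mpr
      ⟨(b / g : ℕ), by rw [← Nat.cast_mul, Nat.div_mul_cancel hgb]⟩)
  have hrel := relIndex_mul_index hle
  rw [index_zmultiples_natCast (hgb.trans hb), index_zmultiples_natCast hb] at hrel
  calc b * _ = (zmultiples (b : ZMod n)).relIndex (zmultiples (g : ZMod n)) * g * _ := by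
        rw [hrel]
    _ = g * (d₁ ^ k * d₂) := by rw [← key]; ring

end ZMod

theorem stmt_17 (n r : ℕ) (hn : 0 < n) (hr : 2 ≤ r) (c d : ℤ) :
    Nat.gcd r n *
      Nat.card {p : (Fin (r - 1) → ZMod n) × ZMod n //
        (∀ i, ∃ t : ZMod n, p.1 i = t * ((n / Int.gcd (c - d) n : ℕ) : ZMod n)) ∧
        (∃ t : ZMod n, p.2 = t * ((n / Int.gcd (c + (r - 1) * d) n : ℕ) : ZMod n)) ∧
        (∃ t : ZMod n, p.2 - ∑ i, p.1 i = t * ((Nat.gcd r n : ℕ) : ZMod n))}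
    = Nat.gcd (Nat.gcd (n / Int.gcd (c - d) n) (n / Int.gcd (c + (r - 1) * d) n)) (Nat.gcd r n) *
      ((Int.gcd (c - d) n) ^ (r - 1) * Int.gcd (c + (r - 1) * d) n) := by
  have : NeZero n := ⟨hn.ne'⟩
  rw [ZMod.card_subtype_eq_card_comap_subSumHom]
  exact ZMod.card_comap_subSumHom (by omega) (Int.gcd_dvd_natAbs_right _ _)
    (Int.gcd_dvd_natAbs_right _ _) (Nat.gcd_dvd_right r n)
end
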